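/- The deformed Bessel function J_n^μ satisfies the third-order differential-difference equation ((xD_μ − [n]_μ)(xD_μ − [−n]_μ)(xD_μ + β_n + 2μ − 1) + x²(xD_μ + β_n + 1)) J_n^μ = 0, where β_n = 0 if n is even and β_n = 1 − 2μ if n is odd. -/

import Mathlib

/-- The Dunkl operator `D_μ f(x) = f'(x) + μ (f(x) - f(-x))/x`. -/
noncomputable def dunkl (μ : ℝ) (f : ℝ → ℝ) (x : ℝ) : ℝ :=
  deriv f x + μ * (f x - f (-x)) / x

/-- The deformed integer `[n]_μ = n + μ (1 - (-1)^n)`. -/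
noncomputable def dIdx (μ : ℝ) (n : ℕ) : ℝ := n + μ * (1 - (-1 : ℝ) ^ n)

/-- The deformed factorial `[n]_μ!`. -/
noncomputable def dFact (μ : ℝ) : ℕ → ℝ
  | 0 => 1
  | n + 1 => dIdx μ (n + 1) * dFact μ n

/-- The deformed Bessel function `J_n^μ`. -/
noncomputable def Jmu (μ : ℝ) (n : ℕ) (x : ℝ) : ℝ :=
  ∑' k : ℕ, (-1 : ℝ) ^ k * (Nat.factorial (2 * k + n)) /
      ((Nat.factorial k) * (Nat.factorial (k + n)) * dFact μ (2 * k + n)) *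
    (x / 2) ^ (2 * k + n)

/-- The operator `f ↦ x D_μ f + c f`. -/
noncomputable def opA (μ : ℝ) (c : ℝ) (f : ℝ → ℝ) : ℝ → ℝ :=
  fun x => x * dunkl μ f x + c * f x

/-- `β_n`: `0` for even `n`, `1 - 2μ` for odd `n`. -/
noncomputable def betaN (μ : ℝ) (n : ℕ) : ℝ := if Even n then 0 else 1 - 2 * μ

/-!
On a series `∑ b_k x^(2k+n)`, whose terms all have the parity of `n`, the operator `x D_μ` acts
diagonally: `x D_μ x^m = [m]_μ x^m`. Hence every `x D_μ + c` multiplies the `k`-th coefficient by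
`[2k+n]_μ + c`, while multiplication by `x²` shifts the index by one. The equation for `J_n^μ` thus
becomes `P(k+1) c_(k+1) + Q(k) c_k = 0` for explicit factors `P`, `Q`, with `P(0) = 0` because
`[n]_μ - [n]_μ = 0`, and this two-term recurrence follows from the ratio `c_(k+1) / c_k` of the
coefficients of `J_n^μ`. Termwise differentiation is justified by the bound `|c_k| ≤ 1 / k!`.
-/

open Nat

lemma dIdx_two_mul_add (μ : ℝ) (k n : ℕ) : dIdx μ (2 * k + n) = 2 * k + dIdx μ n := by
  simp only [dIdx, pow_add, pow_mul, neg_one_sq, one_pow, one_mul]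
  push_cast
  ring

lemma dIdx_of_even (μ : ℝ) {m : ℕ} (hm : Even m) : dIdx μ m = m := by
  simp [dIdx, hm.neg_one_pow]

lemma dIdx_of_odd (μ : ℝ) {m : ℕ} (hm : Odd m) : dIdx μ m = m + 2 * μ := by
  rw [dIdx, hm.neg_one_pow]
  ring

lemma natCast_le_dIdx {μ : ℝ} (hμ : 0 ≤ μ) (m : ℕ) : (m : ℝ) ≤ dIdx μ m := by
  rcases Nat.even_or_odd m with hm | hm
  · rw [dIdx_of_even μ hm]
  · rw [dIdx_of_odd μ hm]
    linarith

lemma dIdx_pos {μ : ℝ} (hμ : 0 ≤ μ) {m : ℕ} (hm : 0 < m) : 0 < dIdx μ m :=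
  (Nat.cast_pos.mpr hm).trans_le (natCast_le_dIdx hμ m)

lemma factorial_le_dFact {μ : ℝ} (hμ : 0 ≤ μ) (m : ℕ) : (m ! : ℝ) ≤ dFact μ m := by
  induction m with
  | zero => simp [dFact]
  | succ m ih =>
    rw [dFact, Nat.factorial_succ, Nat.cast_mul]
    exact mul_le_mul (by exact_mod_cast natCast_le_dIdx hμ (m + 1)) ih (by positivity)
      (dIdx_pos hμ m.succ_pos).le

lemma dFact_pos {μ : ℝ} (hμ : 0 ≤ μ) (m : ℕ) : 0 < dFact μ m :=
  (Nat.cast_pos.mpr m.factorial_pos).trans_le (factorial_le_dFact hμ m)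

noncomputable def pseries (n : ℕ) (b : ℕ → ℝ) (x : ℝ) : ℝ :=
  ∑' k, b k * x ^ (2 * k + n)

def FactorialDecay (b : ℕ → ℝ) : Prop :=
  ∃ C M : ℝ, ∀ k, |b k| ≤ C * M ^ k / k !

namespace FactorialDecay

variable {b : ℕ → ℝ}

lemma summable_mul_pow (hb : FactorialDecay b) (n : ℕ) (x : ℝ) :
    Summable fun k => b k * x ^ (2 * k + n) := by
  obtain ⟨C, M, h⟩ := hb
  refine .of_norm_bounded ((Real.summable_pow_div_factorial (M * x ^ 2)).mul_left (C * |x| ^ n))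
    fun k => ?_
  calc ‖b k * x ^ (2 * k + n)‖ = |b k| * ((x ^ 2) ^ k * |x| ^ n) := by
        rw [Real.norm_eq_abs, abs_mul, abs_pow, pow_add, pow_mul, sq_abs]
    _ ≤ C * M ^ k / k ! * ((x ^ 2) ^ k * |x| ^ n) := by gcongr; exact h k
    _ = C * |x| ^ n * ((M * x ^ 2) ^ k / k !) := by rw [mul_pow]; ring

lemma linear_mul (hb : FactorialDecay b) (a : ℝ) :
    FactorialDecay fun k => (2 * k + a) * b k := by
  obtain ⟨C, M, h⟩ := hb
  refine ⟨C * (2 + |a|), 2 * M, fun k => ?_⟩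
  have hk : |2 * (k : ℝ) + a| ≤ (2 + |a|) * 2 ^ k := by
    have h1 : (k : ℝ) ≤ 2 ^ k := by exact_mod_cast Nat.lt_two_pow_self.le
    have h2 : (1 : ℝ) ≤ 2 ^ k := one_le_pow₀ one_le_two
    calc |2 * (k : ℝ) + a| ≤ 2 * k + |a| := by
          refine (abs_add_le _ _).trans_eq ?_
          rw [abs_of_nonneg (by positivity)]
      _ ≤ (2 + |a|) * 2 ^ k := by nlinarith [abs_nonneg a]
  calc |(2 * (k : ℝ) + a) * b k| = |2 * (k : ℝ) + a| * |b k| := abs_mul _ _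
    _ ≤ (2 + |a|) * 2 ^ k * (C * M ^ k / k !) :=
        mul_le_mul hk (h k) (abs_nonneg _) (by positivity)
    _ = C * (2 + |a|) * (2 * M) ^ k / k ! := by rw [mul_pow]; ring

lemma hasDerivAt_pseries (hb : FactorialDecay b) (n : ℕ) (y : ℝ) :
    HasDerivAt (pseries n b) (∑' k, b k * ((2 * k + n : ℕ) * y ^ (2 * k + n - 1))) y := by
  obtain ⟨C, M, h⟩ := hb.linear_mul n
  set R := |y| + 1
  have hR : 1 ≤ R := le_add_of_nonneg_left (abs_nonneg y)
  have hy : y ∈ Metric.ball (0 : ℝ) R := by simp [R]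
  refine hasDerivAt_tsum_of_isPreconnected
    ((Real.summable_pow_div_factorial (M * R ^ 2)).mul_left (C * R ^ n))
    Metric.isOpen_ball (convex_ball 0 R).isPreconnected
    (fun k z _ => (hasDerivAt_pow (2 * k + n) z).const_mul (b k)) (fun k z hz => ?_) hy
    (hb.summable_mul_pow n y) hy
  have hz : |z| ≤ R := by simpa using (Metric.mem_ball.mp hz).le
  have hpow : |z| ^ (2 * k + n - 1) ≤ R ^ n * (R ^ 2) ^ k :=
    calc |z| ^ (2 * k + n - 1) ≤ R ^ (2 * k + n - 1) := by gcongr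
      _ ≤ R ^ (2 * k + n) := pow_le_pow_right₀ hR (Nat.sub_le _ _)
      _ = R ^ n * (R ^ 2) ^ k := by rw [pow_add, pow_mul, mul_comm]
  calc ‖b k * ((2 * k + n : ℕ) * z ^ (2 * k + n - 1))‖
      = |(2 * (k : ℝ) + n) * b k| * |z| ^ (2 * k + n - 1) := by
        rw [Real.norm_eq_abs, abs_mul, abs_mul, abs_mul, abs_pow, Nat.abs_cast,
          abs_of_nonneg (by positivity : (0 : ℝ) ≤ 2 * k + n)]
        push_cast
        ring
    _ ≤ C * M ^ k / k ! * (R ^ n * (R ^ 2) ^ k) :=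
        mul_le_mul (h k) hpow (by positivity) ((abs_nonneg _).trans (h k))
    _ = C * R ^ n * ((M * R ^ 2) ^ k / k !) := by rw [mul_pow]; ring

lemma mul_deriv_pseries (hb : FactorialDecay b) (n : ℕ) (x : ℝ) :
    x * deriv (pseries n b) x = pseries n (fun k => (2 * k + n) * b k) x := by
  have hmul : ∀ m : ℕ, x * (m * x ^ (m - 1)) = m * x ^ m := by
    rintro (_ | m)
    · simp
    · rw [Nat.add_sub_cancel, pow_succ]
      push_cast
      ring
  rw [(hb.hasDerivAt_pseries n x).deriv, pseries, ← tsum_mul_left]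
  refine tsum_congr fun k => ?_
  have := hmul (2 * k + n)
  push_cast at this ⊢
  linear_combination b k * this

end FactorialDecay

lemma pseries_zero (n : ℕ) (b : ℕ → ℝ) : pseries n b 0 = b 0 * 0 ^ n := by
  rw [pseries, tsum_eq_single 0 fun k hk => by simp [hk]]
  simp

lemma pseries_neg (n : ℕ) (b : ℕ → ℝ) (x : ℝ) : pseries n b (-x) = (-1) ^ n * pseries n b x := by
  rw [pseries, pseries, ← tsum_mul_left]
  refine tsum_congr fun k => ?_
  rw [neg_pow, pow_add (-1 : ℝ), pow_mul, neg_one_sq, one_pow, one_mul]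
  ring

lemma pseries_add_sq_mul_pseries_eq_zero {n : ℕ} {b b' : ℕ → ℝ} {x : ℝ}
    (hs : Summable fun k => b k * x ^ (2 * k + n)) (h0 : b 0 = 0) (hsucc : ∀ k, b (k + 1) = -b' k) :
    pseries n b x + x ^ 2 * pseries n b' x = 0 := by
  have hshift : ∀ k, b (k + 1) * x ^ (2 * (k + 1) + n) = -(x ^ 2 * (b' k * x ^ (2 * k + n))) :=
    fun k => by rw [hsucc]; ring
  rw [pseries, hs.tsum_eq_zero_add, h0, zero_mul, zero_add, tsum_congr hshift, tsum_neg,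
    tsum_mul_left, pseries, neg_add_cancel]

/-- The action of `opA μ c` on the coefficients of `pseries n b`. -/
noncomputable def opACoeff (μ : ℝ) (n : ℕ) (c : ℝ) (b : ℕ → ℝ) (k : ℕ) : ℝ :=
  (dIdx μ (2 * k + n) + c) * b k

lemma FactorialDecay.opACoeff {b : ℕ → ℝ} (hb : FactorialDecay b) (μ : ℝ) (n : ℕ) (c : ℝ) :
    FactorialDecay (opACoeff μ n c b) := by
  convert hb.linear_mul (dIdx μ n + c) using 2 with k
  rw [_root_.opACoeff, dIdx_two_mul_add, add_assoc]

theorem opA_pseries {b : ℕ → ℝ} (hb : FactorialDecay b) (μ c : ℝ) (n : ℕ) :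
    opA μ c (pseries n b) = pseries n (opACoeff μ n c b) := by
  funext x
  rcases eq_or_ne x 0 with rfl | hx
  -- at `x = 0` the factor `x` kills the Dunkl term (junk division by `0`), and `[0]_μ = 0`
  · rw [opA, pseries_zero, pseries_zero, opACoeff]
    cases n <;> simp [dIdx]
  have hodd : x * (μ * (pseries n b x - pseries n b (-x)) / x)
      = μ * (1 - (-1) ^ n) * pseries n b x := by
    rw [pseries_neg]
    field_simp
  calc opA μ c (pseries n b) x
      = x * deriv (pseries n b) x + (μ * (1 - (-1) ^ n) + c) * pseries n b x := by
        rw [opA, dunkl, mul_add, hodd]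
        ring
    _ = pseries n (opACoeff μ n c b) x := by
        rw [hb.mul_deriv_pseries, pseries, pseries, pseries, ← tsum_mul_left,
          ← ((hb.linear_mul n).summable_mul_pow n x).tsum_add
            ((hb.summable_mul_pow n x).mul_left _)]
        refine tsum_congr fun k => ?_
        rw [opACoeff, dIdx_two_mul_add, dIdx]
        ring

/-- The coefficients of `J_n^μ` as a series in `x` (rather than `x / 2`). -/
noncomputable def JmuCoeff (μ : ℝ) (n k : ℕ) : ℝ :=
  (-1) ^ k * (2 * k + n)! / (k ! * (k + n)! * dFact μ (2 * k + n)) / 2 ^ (2 * k + n)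

lemma Jmu_eq_pseries (μ : ℝ) (n : ℕ) : Jmu μ n = pseries n (JmuCoeff μ n) := by
  funext x
  refine tsum_congr fun k => ?_
  rw [JmuCoeff, div_pow]
  ring

lemma factorialDecay_JmuCoeff {μ : ℝ} (hμ : 0 ≤ μ) (n : ℕ) : FactorialDecay (JmuCoeff μ n) := by
  refine ⟨1, 1, fun k => ?_⟩
  have hD := factorial_le_dFact hμ (2 * k + n)
  have h1 : (1 : ℝ) ≤ (k + n)! := Nat.one_le_cast.mpr (k + n).factorial_pos
  have h2 : (1 : ℝ) ≤ 2 ^ (2 * k + n) := one_le_pow₀ one_le_two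
  simp only [JmuCoeff, abs_div, abs_mul, abs_pow, abs_neg, abs_one, one_pow, one_mul,
    Nat.abs_cast, abs_two, abs_of_pos (dFact_pos hμ _)]
  calc ((2 * k + n)! : ℝ) / (k ! * (k + n)! * dFact μ (2 * k + n)) / 2 ^ (2 * k + n)
      ≤ (2 * k + n)! / (k ! * 1 * (2 * k + n)!) / 1 := by gcongr
    _ = 1 / k ! := by field_simp

lemma JmuCoeff_succ {μ : ℝ} (hμ : 0 ≤ μ) (n k : ℕ) :
    4 * (k + 1) * (k + n + 1) * dIdx μ (2 * k + n + 1) * dIdx μ (2 * k + n + 2) *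
        JmuCoeff μ n (k + 1)
      = -((2 * k + n + 1) * (2 * k + n + 2) * JmuCoeff μ n k) := by
  have hD := (dFact_pos hμ (2 * k + n)).ne'
  have hd1 : dIdx μ (2 * k + n + 1) ≠ 0 := (dIdx_pos hμ (Nat.succ_pos _)).ne'
  have hd2 : dIdx μ (2 * k + n + 1 + 1) ≠ 0 := (dIdx_pos hμ (Nat.succ_pos _)).ne'
  have hidx : 2 * (k + 1) + n = 2 * k + n + 1 + 1 := by ring
  rw [JmuCoeff, JmuCoeff, hidx, add_right_comm k 1 n]
  simp only [Nat.factorial_succ, dFact, pow_succ]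
  push_cast
  field_simp
  ring

lemma opACoeff_JmuCoeff_succ {μ : ℝ} (hμ : 0 ≤ μ) (n k : ℕ) :
    opACoeff μ n (-dIdx μ n) (opACoeff μ n (-((-(n : ℝ)) + μ * (1 - (-1) ^ n)))
        (opACoeff μ n (betaN μ n + 2 * μ - 1) (JmuCoeff μ n))) (k + 1)
      = -opACoeff μ n (betaN μ n + 1) (JmuCoeff μ n) k := by
  have hB : ((2 * k + n + 1) * (2 * k + n + 2) : ℝ) ≠ 0 := by positivity
  have hrec := JmuCoeff_succ hμ n k
  have hidx : 2 * (k + 1) + n = 2 * k + n + 2 := by ring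
  -- after multiplying by `(m+1)(m+2)`, `m = 2k+n`, the claim is a multiple of `JmuCoeff_succ`:
  -- of `[m+1]_μ` and `[m+2]_μ` exactly the one of odd index is deformed, matching `β_n`
  refine mul_left_cancel₀ hB ?_
  simp only [opACoeff, hidx]
  rcases Nat.even_or_odd n with hn | hn
  · have hm : Even (2 * k + n) := (even_two_mul k).add hn
    rw [dIdx_of_even μ hn, dIdx_of_even μ hm, dIdx_of_even μ (hm.add even_two),
      dIdx_of_odd μ hm.add_one, betaN, if_pos hn, hn.neg_one_pow] at *
    push_cast at hrec ⊢
    linear_combination (2 * k + n + 1 : ℝ) * hrec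
  · have hm : Odd (2 * k + n) := (even_two_mul k).add_odd hn
    rw [dIdx_of_odd μ hn, dIdx_of_odd μ hm, dIdx_of_odd μ (hm.add_even even_two),
      dIdx_of_even μ hm.add_one, betaN, if_neg (Nat.not_even_iff_odd.mpr hn),
      hn.neg_one_pow] at *
    push_cast at hrec ⊢
    linear_combination (2 * k + n + 2 : ℝ) * hrec

theorem Jmu_diff_eq_general (μ : ℝ) (hμ : 0 ≤ μ) (n : ℕ) (x : ℝ) :
    opA μ (-(dIdx μ n)) (opA μ (-((-(n : ℝ)) + μ * (1 - (-1 : ℝ) ^ n)))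
        (opA μ (betaN μ n + 2 * μ - 1) (Jmu μ n))) x +
      x ^ 2 * opA μ (betaN μ n + 1) (Jmu μ n) x = 0 := by
  have hJ := factorialDecay_JmuCoeff hμ n
  rw [Jmu_eq_pseries, opA_pseries hJ, opA_pseries (hJ.opACoeff ..),
    opA_pseries ((hJ.opACoeff ..).opACoeff ..), opA_pseries hJ]
  refine pseries_add_sq_mul_pseries_eq_zero
    (((hJ.opACoeff ..).opACoeff ..).opACoeff .. |>.summable_mul_pow n x) ?_
    (opACoeff_JmuCoeff_succ hμ n)
  simp [opACoeff]

/-- The third-order differential-difference equation satisfied by `J_n^μ`: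
`((xD_μ - [n]_μ)(xD_μ - [-n]_μ)(xD_μ + β_n + 2μ - 1) + x²(xD_μ + β_n + 1)) J_n^μ = 0`. -/
theorem Jmu_diff_eq (μ : ℝ) (hμ : 0 ≤ μ) (n : ℕ) (x : ℝ) (hx : x ≠ 0) :
    opA μ (-(dIdx μ n)) (opA μ (-((-(n : ℝ)) + μ * (1 - (-1 : ℝ) ^ n)))
        (opA μ (betaN μ n + 2 * μ - 1) (Jmu μ n))) x +
      x ^ 2 * opA μ (betaN μ n + 1) (Jmu μ n) x = 0 :=
  Jmu_diff_eq_general μ hμ n x
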